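/- arXiv:2410.02890 — 3 statements merged into one kernel-verified Lean document; each statement's English description precedes it below -/
import Mathlib

section
/- If Σ_x (α − Q(x))₊ ≥ ε, then there exists a probability distribution P on the finite set X with D_TV(P, Q) ≤ ε such that Σ_x (P(x) − α)₊ = (Σ_x (Q(x) − α)₊ − ε)₊. -/
theorem stmt_3 {X : Type*} [Fintype X] (Q : X → ℝ) (α ε : ℝ)
    (hQ : ∀ x, 0 ≤ Q x) (hQsum : ∑ x, Q x = 1)
    (hα0 : 0 < α) (hα1 : α < 1) (hε : 0 ≤ ε)
    (hcond : ∑ x, max (α - Q x) 0 ≥ ε) :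
    ∃ P : X → ℝ, (∀ x, 0 ≤ P x) ∧ ∑ x, P x = 1 ∧
      (1 / 2) * ∑ x, |P x - Q x| ≤ ε ∧
      ∑ x, max (P x - α) 0 = max ((∑ x, max (Q x - α) 0) - ε) 0 := by
  set S : ℝ := ∑ x, max (Q x - α) 0 with hSdef
  set T : ℝ := ∑ x, max (α - Q x) 0 with hTdef
  have hS0 : 0 ≤ S := Finset.sum_nonneg fun x _ => le_max_right _ _
  by_cases hSz : S = 0
  · -- P = Q works
    refine ⟨Q, hQ, hQsum, ?_, ?_⟩
    · simp [abs_nonneg, le_trans hε hcond, hε]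
    · have h1 : ∀ x ∈ Finset.univ, max (Q x - α) 0 = 0 := by
        intro x _
        have := (Finset.sum_eq_zero_iff_of_nonneg
          (fun x _ => le_max_right (Q x - α) 0)).mp hSz
        exact this x (Finset.mem_univ x)
      rw [Finset.sum_eq_zero h1]
      have : S - ε ≤ 0 := by rw [hSz]; linarith
      simp [max_eq_right this]
  by_cases hεz : ε = 0
  · refine ⟨Q, hQ, hQsum, ?_, ?_⟩
    · simp [hεz]
    · rw [hεz, sub_zero, max_eq_left hS0]
  have hSpos : 0 < S := lt_of_le_of_ne hS0 (Ne.symm hSz)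
  have hεpos : 0 < ε := lt_of_le_of_ne hε (Ne.symm hεz)
  have hTpos : 0 < T := lt_of_lt_of_le hεpos hcond
  set t : ℝ := min ε S with htdef
  have ht0 : 0 ≤ t := le_min hε hS0
  have htS : t ≤ S := min_le_right _ _
  have htε : t ≤ ε := min_le_left _ _
  have htT : t ≤ T := le_trans htε hcond
  set P : X → ℝ := fun x =>
    Q x - (t / S) * max (Q x - α) 0 + (t / T) * max (α - Q x) 0 with hPdef
  have hfrS : t / S ≤ 1 := (div_le_one hSpos).mpr htS
  have hfrS0 : 0 ≤ t / S := div_nonneg ht0 hSpos.le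
  have hfrT : t / T ≤ 1 := (div_le_one hTpos).mpr htT
  have hfrT0 : 0 ≤ t / T := div_nonneg ht0 hTpos.le
  refine ⟨P, ?_, ?_, ?_, ?_⟩
  · intro x
    rcases le_or_gt (Q x) α with hx | hx
    · have h1 : max (Q x - α) 0 = 0 := max_eq_right (by linarith)
      have h2 : 0 ≤ max (α - Q x) 0 := le_max_right _ _
      simp only [hPdef, h1]
      nlinarith [hQ x]
    · have h2 : max (α - Q x) 0 = 0 := max_eq_right (by linarith)
      have h1 : max (Q x - α) 0 = Q x - α := max_eq_left (by linarith)
      simp only [hPdef, h1, h2]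
      nlinarith
  · simp only [hPdef]
    rw [Finset.sum_add_distrib, Finset.sum_sub_distrib, ← Finset.mul_sum,
      ← Finset.mul_sum, ← hSdef, ← hTdef, hQsum,
      div_mul_cancel₀ _ hSz, div_mul_cancel₀ _ (ne_of_gt hTpos)]
    ring
  · have key : ∀ x, |P x - Q x| = (t / S) * max (Q x - α) 0 + (t / T) * max (α - Q x) 0 := by
      intro x
      rcases le_or_gt (Q x) α with hx | hx
      · have h1 : max (Q x - α) 0 = 0 := max_eq_right (by linarith)
        have h2 : max (α - Q x) 0 = α - Q x := max_eq_left (by linarith)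
        simp only [hPdef, h1, h2]
        rw [abs_of_nonneg (by nlinarith)]
        ring
      · have h2 : max (α - Q x) 0 = 0 := max_eq_right (by linarith)
        have h1 : max (Q x - α) 0 = Q x - α := max_eq_left (by linarith)
        simp only [hPdef, h1, h2]
        rw [abs_of_nonpos (by nlinarith)]
        ring
    calc (1/2 : ℝ) * ∑ x, |P x - Q x|
        = (1/2) * ∑ x, ((t / S) * max (Q x - α) 0 + (t / T) * max (α - Q x) 0) := by
          congr 1; exact Finset.sum_congr rfl fun x _ => key x
      _ = (1/2) * ((t / S) * S + (t / T) * T) := by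
          rw [Finset.sum_add_distrib, ← Finset.mul_sum, ← Finset.mul_sum, ← hSdef, ← hTdef]
      _ = t := by
          rw [div_mul_cancel₀ _ hSz, div_mul_cancel₀ _ (ne_of_gt hTpos)]; ring
      _ ≤ ε := htε
  · have key : ∀ x, max (P x - α) 0 = (1 - t / S) * max (Q x - α) 0 := by
      intro x
      rcases le_or_gt (Q x) α with hx | hx
      · have h1 : max (Q x - α) 0 = 0 := max_eq_right (by linarith)
        have h2 : max (α - Q x) 0 = α - Q x := max_eq_left (by linarith)
        simp only [hPdef, h1, h2]
        rw [max_eq_right (by nlinarith)]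
        ring
      · have h2 : max (α - Q x) 0 = 0 := max_eq_right (by linarith)
        have h1 : max (Q x - α) 0 = Q x - α := max_eq_left (by linarith)
        simp only [hPdef, h1, h2]
        rw [max_eq_left (by nlinarith)]
        ring
    rw [Finset.sum_congr rfl fun x _ => key x, ← Finset.mul_sum, ← hSdef]
    rcases le_or_gt ε S with h | h
    · have ht : t = ε := min_eq_left h
      rw [max_eq_left (by linarith), ht]
      field_simp
    · have ht : t = S := min_eq_right h.le
      rw [max_eq_right (by linarith), ht]
      rw [div_self hSz]
      ring
end

section
/- Coarsening increases the watermarking Type-II error bound: for any function f : X → K between finite sets, any probability distribution P on X, and any α ≥ 0, Σ_{k ∈ K} ((Σ_{x : f(x)=k} P(x)) − α)₊ ≥ Σ_{x ∈ X} (P(x) − α)₊ − α·max(|X| − |K|, 0), and in particular, if f is injective then Σ_{k ∈ K} ((Σ_{x : f(x)=k} P(x)) − α)₊ = Σ_{x ∈ X} (P(x) − α)₊. -/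
private lemma fiber_le {X : Type*} (P : X → ℝ) (α : ℝ)
    (hP : ∀ x, 0 ≤ P x) (hα : 0 ≤ α) (s : Finset X) :
    ∑ x ∈ s, max (P x - α) 0 ≤ max ((∑ x ∈ s, P x) - α) 0 := by
  classical
  induction s using Finset.induction with
  | empty => simp
  | @insert a s hx ih =>
    rw [Finset.sum_insert hx, Finset.sum_insert hx]
    rcases le_or_gt (P a) α with h | h
    · have h1 : max (P a - α) 0 = 0 := max_eq_right (by linarith)
      rw [h1, zero_add]
      refine ih.trans (max_le_max ?_ le_rfl)
      have := hP a; linarith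
    · have h1 : max (P a - α) 0 = P a - α := max_eq_left (by linarith)
      rw [h1]
      have hs : 0 ≤ ∑ x ∈ s, P x := Finset.sum_nonneg fun x _ => hP x
      have h3 : max ((P a + ∑ x ∈ s, P x) - α) 0 = (P a + ∑ x ∈ s, P x) - α :=
        max_eq_left (by linarith)
      have h4 : ∑ x ∈ s, max (P x - α) 0 ≤ ∑ x ∈ s, P x :=
        ih.trans (max_le (by linarith) hs)
      rw [h3]; linarith

theorem stmt_5 {X K : Type*} [Fintype X] [Fintype K] [DecidableEq K]
    (f : X → K) (P : X → ℝ) (α : ℝ)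
    (hP : ∀ x, 0 ≤ P x) (hsum : ∑ x, P x = 1) (hα : 0 ≤ α) :
    (∑ k, max ((∑ x ∈ Finset.univ.filter (fun x => f x = k), P x) - α) 0
        ≥ (∑ x, max (P x - α) 0)
          - α * max ((Fintype.card X : ℝ) - (Fintype.card K : ℝ)) 0) ∧
    (Function.Injective f →
      ∑ k, max ((∑ x ∈ Finset.univ.filter (fun x => f x = k), P x) - α) 0
        = ∑ x, max (P x - α) 0) := by
  classical
  have key : ∑ x, max (P x - α) 0
      ≤ ∑ k, max ((∑ x ∈ Finset.univ.filter (fun x => f x = k), P x) - α) 0 := by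
    rw [← Finset.sum_fiberwise Finset.univ f (fun x => max (P x - α) 0)]
    exact Finset.sum_le_sum fun k _ => fiber_le P α hP hα _
  constructor
  · have hnn : 0 ≤ α * max ((Fintype.card X : ℝ) - (Fintype.card K : ℝ)) 0 :=
      mul_nonneg hα (le_max_right _ _)
    linarith
  · intro hf
    rw [← Finset.sum_fiberwise Finset.univ f (fun x => max (P x - α) 0)]
    refine Finset.sum_congr rfl fun k _ => ?_
    set s := Finset.univ.filter (fun x => f x = k) with hs
    have hcard : s.card ≤ 1 := by
      refine Finset.card_le_one.mpr fun a ha b hb => ?_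
      simp only [hs, Finset.mem_filter] at ha hb
      exact hf (ha.2.trans hb.2.symm)
    interval_cases h : s.card
    · rw [Finset.card_eq_zero.mp h]; simp [hα]
    · obtain ⟨a, ha⟩ := Finset.card_eq_one.mp h
      rw [ha]; simp
end

section
/- Construction of the optimal watermark joint distribution: let P be a probability distribution on finite set X, α ∈ (0,1], and let Z = X ∪ {z̃} with z̃ ∉ X. Define P_joint(x, z) = min(P(x), α) if z = x ∈ X, P_joint(x, z̃) = (P(x) − α)₊, and P_joint(x,z) = 0 otherwise. Then P_joint is a probability distribution on X × Z whose X-marginal is P, its Z-marginal satisfies P_Z(z) ≤ α for all z ∈ X, and P_joint(x ≠ z, z ≠ z̃) = 0, so the probability of the event {(x,z) : z = z̃} equals Σ_x (P(x) − α)₊. -/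
/-- Construction of the optimal watermark joint distribution, with `Z = X ∪ {z̃}`
realized as `Option X` (`none` playing the role of the redundant symbol `z̃`,
`some x` playing the role of `x ∈ X`). -/
theorem stmt_15 {X : Type*} [Fintype X] [DecidableEq X]
    (P : X → ℝ) (hP : ∀ x, 0 ≤ P x) (hPsum : ∑ x, P x = 1)
    (α : ℝ) (hα0 : 0 < α) (hα1 : α ≤ 1)
    (Pj : X → Option X → ℝ)
    (hPj : ∀ x z, Pj x z =
      if z = some x then min (P x) α
      else if z = none then max (P x - α) 0 else 0) :
    (∀ x z, 0 ≤ Pj x z) ∧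
    (∑ x, ∑ z, Pj x z = 1) ∧
    (∀ x, ∑ z, Pj x z = P x) ∧
    (∀ y : X, ∑ x, Pj x (some y) ≤ α) ∧
    (∀ x z, z ≠ none → z ≠ some x → Pj x z = 0) ∧
    (∑ x, Pj x none = ∑ x, max (P x - α) 0) := by
  have hmarg : ∀ x, ∑ z, Pj x z = P x := by
    intro x
    rw [Fintype.sum_option]
    have h1 : Pj x none = max (P x - α) 0 := by simp [hPj]
    have h2 : ∑ y : X, Pj x (some y) = min (P x) α := by
      rw [Finset.sum_eq_single x]
      · simp [hPj]
      · intro b _ hb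
        simp [hPj, hb, Option.some_inj, (Ne.symm hb)]
      · simp
    rw [h1, h2]
    rcases le_total (P x) α with h | h
    · rw [min_eq_left h, max_eq_right (by linarith)]; ring
    · rw [min_eq_right h, max_eq_left (by linarith)]; ring
  refine ⟨?_, ?_, hmarg, ?_, ?_, ?_⟩
  · intro x z
    rw [hPj]
    split_ifs
    · exact le_min (hP x) hα0.le
    · exact le_max_right _ _
    · exact le_refl 0
  · rw [Finset.sum_congr rfl (fun x _ => hmarg x), hPsum]
  · intro y
    rw [Finset.sum_eq_single y]
    · simp only [hPj, if_pos rfl]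
      exact min_le_right _ _
    · intro b _ hb
      simp [hPj, Option.some_inj, (Ne.symm hb)]
    · simp
  · intro x z h1 h2
    simp [hPj, h1, h2]
  · apply Finset.sum_congr rfl
    intro x _
    simp [hPj]
end
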